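/- arXiv:math/0207240 — 2 statements merged into one kernel-verified Lean document; each statement's English description precedes it below -/
import Mathlib

section
/- Let f be a polynomial in two variables over ℂ, regarded as an element of (ℂ[X])[Y], which is monic of degree n ≥ 1 in Y. For x ∈ ℂ, let f_x ∈ ℂ[Y] denote the one-variable polynomial obtained by evaluating all coefficients of f at x. Let N = {x ∈ ℂ : f_x has fewer than n distinct roots in ℂ}. Let C = {(x, y) ∈ ℂ × ℂ : x ∉ N and f_x(y) = 0}. Then the first-coordinate projection π : C → ℂ ∖ N, π(x, y) = x, is a covering map, and every fiber π⁻¹(x) has exactly n elements. -/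
/-!
Over a point `x₀ ∉ N` the `n` roots of `f_{x₀}` are distinct, hence simple, so the implicit
function theorem applied to `(x, y) ↦ f_x(y)` gives `n` continuous root branches near `x₀`, with
values in pairwise disjoint neighbourhoods of these roots. As `f_x` has at most `n` roots, the
branches exhaust them; their graphs are the sheets of a trivialization of the projection near
`x₀`, the sheet of a point being read off from the neighbourhood containing its `y`-coordinate.
-/

open Polynomial Filter Topology Function

namespace HasStrictFDerivAt

variable {𝕜 : Type*} [NontriviallyNormedField 𝕜]
  {E₁ : Type*} [NormedAddCommGroup E₁] [NormedSpace 𝕜 E₁] [CompleteSpace E₁]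
  {E₂ : Type*} [NormedAddCommGroup E₂] [NormedSpace 𝕜 E₂] [CompleteSpace E₂]
  {F : Type*} [NormedAddCommGroup F] [NormedSpace 𝕜 F] [CompleteSpace F]
  {u : E₁ × E₂} {f : E₁ × E₂ → F} {f'u : E₁ × E₂ →L[𝕜] F}

theorem eventually_continuousAt_implicitFunctionOfProdDomain
    (dfu : HasStrictFDerivAt f f'u u) (if₂u : (f'u ∘L .inr 𝕜 E₁ E₂).IsInvertible) :
    ∀ᶠ x in 𝓝 u.1, ContinuousAt (dfu.implicitFunctionOfProdDomain if₂u) x := by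
  set φ := dfu.implicitFunctionDataOfProdDomain if₂u
  have hmem : (f u, u.1) ∈ φ.toOpenPartialHomeomorph.target :=
    φ.map_pt_mem_toOpenPartialHomeomorph_target
  have hopen : IsOpen {x | (f u, x) ∈ φ.toOpenPartialHomeomorph.target} :=
    φ.toOpenPartialHomeomorph.open_target.preimage (Continuous.prodMk_right _)
  filter_upwards [hopen.mem_nhds hmem] with x hx
  exact continuous_snd.continuousAt.comp
    ((φ.toOpenPartialHomeomorph.continuousAt_symm hx).comp (Continuous.prodMk_right _).continuousAt)

end HasStrictFDerivAt

theorem ContinuousLinearMap.isInvertible_toSpanSingleton {𝕜 : Type*} [NormedField 𝕜] {d : 𝕜}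
    (hd : d ≠ 0) : (ContinuousLinearMap.toSpanSingleton 𝕜 d).IsInvertible :=
  ⟨ContinuousLinearEquiv.unitsEquivAut 𝕜 (Units.mk0 d hd), by ext; simp⟩

namespace Bundle.Trivialization

theorem exists_of_sections {E X ι : Type*} [TopologicalSpace E] [TopologicalSpace X]
    [TopologicalSpace ι] [DiscreteTopology ι] [Nonempty ι] {p : E → X} (hp : Continuous p)
    {V : Set X} (hV : IsOpen V) (hVne : V.Nonempty) (s : ι → V → E) (hs : ∀ i, Continuous (s i))
    (hps : ∀ i x, p (s i x) = x) (W : ι → Set E) (hW : ∀ i, IsOpen (W i))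
    (hWdisj : Pairwise (Disjoint on W)) (hsW : ∀ i x, s i x ∈ W i)
    (hexh : ∀ e (he : p e ∈ V), ∃ i, s i ⟨p e, he⟩ = e) :
    ∃ t : Trivialization ι p, t.baseSet = V := by
  have : Nonempty E := ⟨s (Classical.arbitrary ι) ⟨_, hVne.some_mem⟩⟩
  have hmem : ∀ {i e}, e ∈ W i → (he : p e ∈ V) → s i ⟨p e, he⟩ = e := by
    intro i e hei he
    obtain ⟨j, hj⟩ := hexh e he
    obtain rfl : i = j := by_contra fun hij => (hWdisj hij).ne_of_mem hei (hj ▸ hsW j _) rfl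
    exact hj
  refine ⟨hV.trivializationDiscrete (fun i => W i ∩ p ⁻¹' V) V ?_ ?_ ?_ ?_ ?_, rfl⟩
  · intro i O hOV
    refine ⟨fun hO => (hO.preimage hp).inter ((hW i).inter (hV.preimage hp)), fun hO => ?_⟩
    have : O = Subtype.val '' (s i ⁻¹' (p ⁻¹' O ∩ (W i ∩ p ⁻¹' V))) := by
      ext x
      refine ⟨fun hx => ⟨⟨x, hOV hx⟩, ?_, rfl⟩, ?_⟩
      · simp [hps, hx, hsW, hOV hx]
      · rintro ⟨x, hx, rfl⟩
        simpa [hps] using hx.1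
    rw [this]
    exact hV.isOpenMap_subtype_val _ (hO.preimage (hs i))
  · rintro i e ⟨hei, he⟩ e' ⟨hei', he'⟩ hpe
    rw [← hmem hei he, ← hmem hei' he']
    simp_rw [hpe]
  · intro i x hx
    exact ⟨s i ⟨x, hx⟩, ⟨hsW i _, by simpa [hps] using hx⟩, hps i _⟩
  · exact fun i j hij => (hWdisj hij).mono Set.inter_subset_left Set.inter_subset_left
  · intro e he
    obtain ⟨i, hi⟩ := hexh e he
    exact Set.mem_iUnion.2 ⟨i, hi ▸ hsW i _, he⟩

theorem ncard_preimage_singleton {B F Z : Type*} [TopologicalSpace B] [TopologicalSpace F]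
    [TopologicalSpace Z] {proj : Z → B} (e : Trivialization F proj) {b : B}
    (hb : b ∈ e.baseSet) : (proj ⁻¹' {b}).ncard = Nat.card F :=
  Nat.card_congr (e.preimageSingletonHomeomorph hb).toEquiv

end Bundle.Trivialization

namespace Polynomial

section Roots

variable {K : Type*} [Field K] [DecidableEq K]

theorem card_roots_eq_natDegree_of_le_card_roots_toFinset {p : K[X]}
    (h : p.natDegree ≤ p.roots.toFinset.card) :
    p.roots.toFinset.card = p.natDegree ∧ Multiset.card p.roots = p.natDegree :=
  have h₁ := p.roots.toFinset_card_le
  have h₂ := p.card_roots'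
  ⟨by omega, by omega⟩

theorem eval_derivative_ne_zero_of_le_card_roots_toFinset {p : K[X]} (hp : p ≠ 0)
    (h : p.natDegree ≤ p.roots.toFinset.card) {b : K} (hb : p.IsRoot b) :
    p.derivative.eval b ≠ 0 := by
  obtain ⟨hdistinct, hcard⟩ := card_roots_eq_natDegree_of_le_card_roots_toFinset h
  have hnodup : p.roots.Nodup := by
    rw [← Multiset.toFinset_card_eq_card_iff_nodup, hdistinct, hcard]
  have hsep := (nodup_roots_iff_of_splits hp (splits_iff_card_roots.2 hcard)).1 hnodup
  exact hsep.eval₂_derivative_ne_zero (RingHom.id K) hb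

end Roots

theorem isRoot_iff_mem_range_of_injective {R : Type*} [CommRing R] [IsDomain R] {p : R[X]}
    (hp : p ≠ 0) {ι : Type*} [Fintype ι] (hι : p.natDegree ≤ Fintype.card ι) {g : ι → R}
    (hg : Injective g) (hroot : ∀ i, p.IsRoot (g i)) (z : R) :
    p.IsRoot z ↔ z ∈ Set.range g := by
  classical
  have hsub : Finset.univ.image g ⊆ p.roots.toFinset := by
    intro z hz
    obtain ⟨i, -, rfl⟩ := Finset.mem_image.1 hz
    exact Multiset.mem_toFinset.2 ((mem_roots hp).2 (hroot i))
  have heq : Finset.univ.image g = p.roots.toFinset := by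
    refine Finset.eq_of_subset_of_card_le hsub ?_
    rw [Finset.card_image_of_injective _ hg, Finset.card_univ]
    exact p.roots.toFinset_card_le.trans (p.card_roots'.trans hι)
  rw [← mem_roots hp, ← Multiset.mem_toFinset, ← heq]
  simp

theorem contDiff_eval_map_evalRingHom {𝕜 : Type*} [NontriviallyNormedField 𝕜] (p : 𝕜[X][X])
    (n : WithTop ℕ∞) : ContDiff 𝕜 n fun v : 𝕜 × 𝕜 => (p.map (evalRingHom v.1)).eval v.2 := by
  simp_rw [map_evalRingHom_eval]
  induction p using Polynomial.induction_on' with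
  | add p q hp hq => simpa only [evalEval_add] using hp.add hq
  | monomial k a =>
    simpa [← C_mul_X_pow_eq_monomial, evalEval_mul, evalEval_pow, evalEval_C] using
      ((contDiff_aeval (𝕜 := 𝕜) a n).comp contDiff_fst).mul (contDiff_snd.pow k)

variable {𝕜 : Type*} [RCLike 𝕜]

theorem exists_hasStrictFDerivAt_eval_map_evalRingHom (p : 𝕜[X][X]) (a b : 𝕜) :
    ∃ L : 𝕜 × 𝕜 →L[𝕜] 𝕜,
      HasStrictFDerivAt (fun v : 𝕜 × 𝕜 => (p.map (evalRingHom v.1)).eval v.2) L (a, b) ∧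
      L ∘L .inr 𝕜 𝕜 𝕜 = .toSpanSingleton 𝕜 ((p.map (evalRingHom a)).derivative.eval b) := by
  have hL := ((p.contDiff_eval_map_evalRingHom 1).contDiffAt (x := (a, b))).hasStrictFDerivAt
    one_ne_zero
  refine ⟨_, hL, ?_⟩
  have hcomp := hL.hasFDerivAt.comp b (hasFDerivAt_prodMk_right a b)
  exact hcomp.unique ((p.map (evalRingHom a)).hasDerivAt b).hasFDerivAt

theorem exists_root_branch (f : 𝕜[X][X]) {a b : 𝕜} (hroot : (f.map (evalRingHom a)).IsRoot b)
    (hsimple : (f.map (evalRingHom a)).derivative.eval b ≠ 0) :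
    ∃ ψ : 𝕜 → 𝕜, Tendsto ψ (𝓝 a) (𝓝 b) ∧
      ∀ᶠ x in 𝓝 a, ContinuousAt ψ x ∧ (f.map (evalRingHom x)).IsRoot (ψ x) := by
  obtain ⟨L, hL, hLinr⟩ := f.exists_hasStrictFDerivAt_eval_map_evalRingHom a b
  have hinv : (L ∘L .inr 𝕜 𝕜 𝕜).IsInvertible :=
    hLinr ▸ ContinuousLinearMap.isInvertible_toSpanSingleton hsimple
  refine ⟨hL.implicitFunctionOfProdDomain hinv, hL.tendsto_implicitFunctionOfProdDomain hinv, ?_⟩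
  filter_upwards [hL.eventually_continuousAt_implicitFunctionOfProdDomain hinv,
    hL.eventually_apply_implicitFunctionOfProdDomain hinv] with x hcont hx
  exact ⟨hcont, hx.trans hroot⟩

variable [DecidableEq 𝕜]

theorem exists_root_branches (f : 𝕜[X][X]) (hf : f.Monic) {a : 𝕜}
    (ha : f.natDegree ≤ (f.map (evalRingHom a)).roots.toFinset.card) :
    ∃ U : Set 𝕜, IsOpen U ∧ a ∈ U ∧
      ∃ (ψ : Fin f.natDegree → 𝕜 → 𝕜) (V : Fin f.natDegree → Set 𝕜),
        (∀ i, IsOpen (V i)) ∧ Pairwise (Disjoint on V) ∧ (∀ i, ContinuousOn (ψ i) U) ∧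
        (∀ x ∈ U, ∀ i, ψ i x ∈ V i) ∧
        ∀ x ∈ U, ∀ z, (f.map (evalRingHom x)).IsRoot z ↔ z ∈ Set.range (ψ · x) := by
  have hq0 : ∀ x, f.map (evalRingHom x) ≠ 0 := fun x => (hf.map _).ne_zero
  have hdeg : ∀ x, (f.map (evalRingHom x)).natDegree = f.natDegree := fun x => hf.natDegree_map _
  rw [← hdeg a] at ha
  let y : Fin f.natDegree ≃ (f.map (evalRingHom a)).roots.toFinset :=
    (Finset.equivFinOfCardEq
      ((card_roots_eq_natDegree_of_le_card_roots_toFinset ha).1.trans (hdeg a))).symm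
  have hyroot (i) : (f.map (evalRingHom a)).IsRoot (y i) :=
    (mem_roots (hq0 a)).1 (Multiset.mem_toFinset.1 (y i).2)
  have hyinj : Injective fun i => (y i : 𝕜) := Subtype.val_injective.comp y.injective
  choose ψ hψa hψ using fun i => f.exists_root_branch (hyroot i)
    (eval_derivative_ne_zero_of_le_card_roots_toFinset (hq0 a) ha (hyroot i))
  obtain ⟨W, hW, hWdisj⟩ := (Set.finite_range fun i => (y i : 𝕜)).t2_separation
  have hV : Pairwise (Disjoint on fun i => W (y i)) := fun i j hij =>
    hWdisj (Set.mem_range_self i) (Set.mem_range_self j) (hyinj.ne hij)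
  have hev : ∀ᶠ x in 𝓝 a, ∀ i,
      (ContinuousAt (ψ i) x ∧ (f.map (evalRingHom x)).IsRoot (ψ i x)) ∧ ψ i x ∈ W (y i) :=
    eventually_all.2 fun i => (hψ i).and (hψa i ((hW _).2.mem_nhds (hW _).1))
  obtain ⟨U, hU, hUo, haU⟩ := eventually_nhds_iff.1 hev
  refine ⟨U, hUo, haU, ψ, fun i => W (y i), fun i => (hW _).2, hV,
    fun i => continuousOn_of_forall_continuousAt fun x hx => (hU x hx i).1.1,
    fun x hx i => (hU x hx i).2, fun x hx => ?_⟩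
  have hinj : Injective (ψ · x) := fun i j hij =>
    by_contra fun hne => (hV hne).ne_of_mem (hU x hx i).2 (hU x hx j).2 hij
  exact isRoot_iff_mem_range_of_injective (hq0 x) (by rw [hdeg, Fintype.card_fin]) hinj
    fun i => (hU x hx i).1.2

def branchLocus (f : 𝕜[X][X]) : Set 𝕜 :=
  {x | (f.map (evalRingHom x)).roots.toFinset.card < f.natDegree}

def unbranchedZeroLocus (f : 𝕜[X][X]) : Set (𝕜 × 𝕜) :=
  {v | v.1 ∉ f.branchLocus ∧ (f.map (evalRingHom v.1)).eval v.2 = 0}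

theorem exists_trivialization_mem_baseSet (f : 𝕜[X][X]) (hf : f.Monic) (hn : 1 ≤ f.natDegree)
    (pr : f.unbranchedZeroLocus → ↥(f.branchLocusᶜ)) (hpr : ∀ v, (pr v : 𝕜) = (v : 𝕜 × 𝕜).1)
    (x₀ : ↥(f.branchLocusᶜ)) :
    ∃ t : Bundle.Trivialization (Fin f.natDegree) pr, x₀ ∈ t.baseSet := by
  obtain ⟨U, hUo, hx₀U, ψ, V, hVo, hVdisj, hψc, hψV, hroots⟩ :=
    f.exists_root_branches hf (not_lt.1 x₀.2)
  have : Nonempty (Fin f.natDegree) := ⟨⟨0, hn⟩⟩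
  have hprc : Continuous pr := continuous_induced_rng.2 <| by
    simpa only [Function.comp_def, hpr] using continuous_fst.comp continuous_subtype_val
  have hval : Continuous fun x : ↥(Subtype.val ⁻¹' U : Set ↥(f.branchLocusᶜ)) => (x : 𝕜) :=
    continuous_subtype_val.comp continuous_subtype_val
  have hexh : ∀ v (hv : pr v ∈ Subtype.val ⁻¹' U), ∃ i, (⟨((pr v : 𝕜), ψ i (pr v)),
      (pr v).2, ((hroots _ hv _).2 ⟨i, rfl⟩ :)⟩ : f.unbranchedZeroLocus) = v := by
    intro v hv
    have hroot : (f.map (evalRingHom (pr v : 𝕜))).IsRoot (v : 𝕜 × 𝕜).2 := hpr v ▸ v.2.2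
    obtain ⟨i, hi⟩ := (hroots _ hv _).1 hroot
    exact ⟨i, Subtype.ext (Prod.ext (hpr v) hi)⟩
  obtain ⟨t, ht⟩ := Bundle.Trivialization.exists_of_sections hprc
    (hUo.preimage continuous_subtype_val) ⟨x₀, hx₀U⟩
    (fun i x => ⟨((x : 𝕜), ψ i x), x.1.2, ((hroots x x.2 _).2 ⟨i, rfl⟩ :)⟩)
    (fun i => (hval.prodMk ((hψc i).comp_continuous hval fun x => x.2)).subtype_mk _)
    (fun i x => Subtype.ext (hpr _)) (fun i => {v | (v : 𝕜 × 𝕜).2 ∈ V i})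
    (fun i => (hVo i).preimage (continuous_snd.comp continuous_subtype_val))
    (fun i j hij => (hVdisj hij).preimage _) (fun i x => hψV x x.2 i) hexh
  exact ⟨t, ht ▸ hx₀U⟩

end Polynomial

/-- For `f ∈ (ℂ[X])[Y]` monic of degree `n ≥ 1` in `Y`, with
`N = {x : the specialization f_x has fewer than n distinct roots}` and
`C = {(x,y) : x ∉ N, f_x(y) = 0}`, the first-coordinate projection `C → ℂ ∖ N` is a
covering map all of whose fibers have exactly `n` elements. -/
theorem stmt7 (f : Polynomial (Polynomial ℂ)) (n : ℕ) (hn : 1 ≤ n)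
    (hmonic : f.Monic) (hdeg : f.natDegree = n)
    (N : Set ℂ)
    (hN : N = {x : ℂ | ((f.map (evalRingHom x)).roots.toFinset.card < n)})
    (C : Set (ℂ × ℂ))
    (hC : C = {p : ℂ × ℂ | p.1 ∉ N ∧ (f.map (evalRingHom p.1)).eval p.2 = 0})
    (pr : ↥C → ↥(Nᶜ)) (hpr : ∀ p : ↥C, (pr p : ℂ) = (p : ℂ × ℂ).1) :
    IsCoveringMap pr ∧ ∀ x : ↥(Nᶜ), (pr ⁻¹' {x}).ncard = n := by
  subst hdeg hN hC
  have htriv := f.exists_trivialization_mem_baseSet hmonic hn pr hpr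
  refine ⟨IsFiberBundle.isCoveringMap htriv, fun x => ?_⟩
  obtain ⟨t, hx⟩ := htriv x
  exact (t.ncard_preimage_singleton hx).trans (Nat.card_fin _)
end

section
/- Let f be a polynomial in two variables over ℂ, regarded as an element of (ℂ[X])[Y], which is monic of degree n ≥ 1 in Y. For x ∈ ℂ, let f_x ∈ ℂ[Y] denote the one-variable polynomial obtained by evaluating all coefficients of f at x, and let N = {x ∈ ℂ : f_x has fewer than n distinct roots in ℂ}. Let h : [0,1] → ℂ ∖ N be a continuous path. Then there exist continuous functions y₁, …, y_n : [0,1] → ℂ such that for every t ∈ [0,1]: f_{h(t)}(y_i(t)) = 0 for each i, and y_i(t) ≠ y_j(t) whenever i ≠ j; in particular, for every t, {y₁(t), …, y_n(t)} is exactly the set of roots of f_{h(t)}. -/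
/-!
Near a point `b₀` where `p b₀` has `n` distinct roots, choose pairwise disjoint open
neighbourhoods `U i` of them. Since `‖p_b(w)‖` is the product of the distances from `w` to the
roots of `p_b`, roots cannot vanish under a small perturbation: for `b` near `b₀` every `U i`
still contains a root of `p b`. When `p b` also has exactly `n` distinct roots, each `U i`
contains exactly one of them, and the same argument at nearby points shows that this root
depends continuously on `b`. Over `[0, 1]` these local enumerations are glued along a
subdivision, each new piece relabelled by the permutation matching the enumeration built so far.
-/

open Polynomial Filter Topology Set Function
open scoped unitInterval

namespace Polynomial

section Enumeration

variable {R : Type*} [CommRing R] {n : ℕ} {q : R[X]} {y y' : Fin n → R}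

def IsRootEnumeration (q : R[X]) (y : Fin n → R) : Prop :=
  Injective y ∧ range y = {c | q.IsRoot c}

theorem IsRootEnumeration.isRoot (hy : q.IsRootEnumeration y) (i : Fin n) : q.IsRoot (y i) :=
  hy.2.subset (mem_range_self i)

theorem IsRootEnumeration.comp_perm (hy : q.IsRootEnumeration y) (e : Equiv.Perm (Fin n)) :
    q.IsRootEnumeration (y ∘ e) :=
  ⟨hy.1.comp e.injective, e.surjective.range_comp y ▸ hy.2⟩

theorem IsRootEnumeration.exists_perm (hy : q.IsRootEnumeration y)
    (hy' : q.IsRootEnumeration y') : ∃ e : Equiv.Perm (Fin n), ∀ i, y' (e i) = y i :=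
  ⟨(Equiv.ofInjective y hy.1).trans
      ((Equiv.setCongr (hy.2.trans hy'.2.symm)).trans (Equiv.ofInjective y' hy'.1).symm),
    fun _ => Equiv.apply_ofInjective_symm hy'.1 _⟩

theorem IsRootEnumeration.eq_of_mem {U : Fin n → Set R} (hU : Pairwise (Disjoint on U))
    (hy : q.IsRootEnumeration y) (hyU : ∀ i, y i ∈ U i) {a : R} (ha : q.IsRoot a) {i : Fin n}
    (hai : a ∈ U i) : a = y i := by
  obtain ⟨j, rfl⟩ : a ∈ range y := hy.2 ▸ ha
  rw [hU.eq (not_disjoint_iff.2 ⟨y j, hyU j, hai⟩)]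

theorem exists_continuousOn_Iic_isRootEnumeration_of_Icc [TopologicalSpace R] {T : Type*}
    [TopologicalSpace T] [LinearOrder T] [OrderClosedTopology T] {p : T → R[X]} {a b : T}
    (hab : a ≤ b) {y : T → Fin n → R} (hyc : ContinuousOn y (Iic a))
    (hy : ∀ t ≤ a, (p t).IsRootEnumeration (y t)) {g : T → Fin n → R}
    (hgc : ContinuousOn g (Icc a b)) (hg : ∀ t ∈ Icc a b, (p t).IsRootEnumeration (g t)) :
    ∃ y' : T → Fin n → R,
      ContinuousOn y' (Iic b) ∧ ∀ t ≤ b, (p t).IsRootEnumeration (y' t) := by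
  obtain ⟨e, he⟩ := (hy a le_rfl).exists_perm (hg a ⟨le_rfl, hab⟩)
  refine ⟨fun t => if t ≤ a then y t else g t ∘ e, ?_, fun t ht => ?_⟩
  · rw [← Iic_union_Icc_eq_Iic hab]
    refine (hyc.congr fun t ht => if_pos ht).union_of_isClosed
      (((continuous_pi fun i => continuous_apply (e i)).comp_continuousOn hgc).congr
        fun t ht => ?_) isClosed_Iic isClosed_Icc
    split_ifs with hta
    · rw [le_antisymm hta ht.1]
      ext i
      exact (he i).symm
    · rfl
  · dsimp only
    split_ifs with hta
    exacts [hy t hta, (hg t ⟨le_of_not_ge hta, ht⟩).comp_perm e]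

variable [IsDomain R] [DecidableEq R]

theorem isRootEnumeration_of_injective (hq : q ≠ 0) (hcard : q.roots.toFinset.card = n)
    (hy : Injective y) (hroot : ∀ i, q.IsRoot (y i)) : q.IsRootEnumeration y := by
  have himage : Finset.univ.image y = q.roots.toFinset := by
    refine Finset.eq_of_subset_of_card_le (fun c hc => ?_) ?_
    · obtain ⟨i, -, rfl⟩ := Finset.mem_image.1 hc
      exact Multiset.mem_toFinset.2 ((mem_roots hq).2 (hroot i))
    · rw [Finset.card_image_of_injective _ hy, Finset.card_fin, hcard]
  refine ⟨hy, Set.ext fun c => ?_⟩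
  simpa [mem_roots hq] using Finset.ext_iff.1 himage c

theorem exists_isRootEnumeration (hq : q ≠ 0) (hcard : q.roots.toFinset.card = n) :
    ∃ y : Fin n → R, q.IsRootEnumeration y := by
  let e := Finset.equivFinOfCardEq hcard
  refine ⟨fun i => e.symm i, isRootEnumeration_of_injective hq hcard
    (Subtype.val_injective.comp e.symm.injective) fun i => ?_⟩
  exact (mem_roots hq).1 (Multiset.mem_toFinset.1 (e.symm i).2)

end Enumeration

section Continuity

variable {K : Type*} [NormedField K] [IsAlgClosed K]

theorem exists_mem_roots_dist_lt {q : K[X]} (hq : q.Monic) {z : K} {ε : ℝ} (hε : 0 ≤ ε)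
    (h : ‖q.eval z‖ < ε ^ q.natDegree) : ∃ a ∈ q.roots, dist a z < ε := by
  by_contra! hfar
  refine h.not_ge ?_
  calc ε ^ q.natDegree = (q.roots.map fun _ => ε).prod := by
        rw [Multiset.map_const', Multiset.prod_replicate, IsAlgClosed.card_roots_eq_natDegree]
    _ ≤ (q.roots.map fun a => ‖z - a‖).prod :=
        Multiset.prod_map_le_prod_map₀ _ _ (fun _ _ => hε)
          fun a ha => (hfar a ha).trans_eq (dist_eq_norm' a z)
    _ = ‖q.eval z‖ := by
        rw [(IsAlgClosed.splits q).eval_eq_prod_roots_of_monic hq, ← normHom_apply,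
          map_multiset_prod, Multiset.map_map]
        rfl

variable {B : Type*} [TopologicalSpace B] {p : B → K[X]} {n : ℕ}

theorem eventually_exists_isRoot_mem (hmonic : ∀ b, (p b).Monic)
    (hdeg : ∀ b, (p b).natDegree = n) {b₀ : B} {w : K}
    (hcont : ContinuousAt (fun b => (p b).eval w) b₀) (hw : (p b₀).IsRoot w) {W : Set K}
    (hW : W ∈ 𝓝 w) : ∀ᶠ b in 𝓝 b₀, ∃ a ∈ W, (p b).IsRoot a := by
  obtain ⟨ε, hε, hball⟩ := Metric.mem_nhds_iff.1 hW
  have hsmall : ∀ᶠ b in 𝓝 b₀, ‖(p b).eval w‖ < ε ^ n :=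
    hcont.norm.eventually (gt_mem_nhds (by simpa [hw.eq_zero] using pow_pos hε n))
  filter_upwards [hsmall] with b hb
  obtain ⟨a, ha, hdist⟩ := exists_mem_roots_dist_lt (hmonic b) hε.le (by rwa [hdeg])
  exact ⟨a, hball hdist, (mem_roots (hmonic b).ne_zero).1 ha⟩

variable [DecidableEq K]

theorem exists_continuousOn_isRootEnumeration (hmonic : ∀ b, (p b).Monic)
    (hdeg : ∀ b, (p b).natDegree = n) (hcont : ∀ z, Continuous fun b => (p b).eval z)
    (hcard : ∀ b, (p b).roots.toFinset.card = n) (b₀ : B) :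
    ∃ V, IsOpen V ∧ b₀ ∈ V ∧ ∃ g : B → Fin n → K,
      ContinuousOn g V ∧ ∀ b ∈ V, (p b).IsRootEnumeration (g b) := by
  have hroots_near :
      ∀ b' w, (p b').IsRoot w → ∀ W ∈ 𝓝 w, ∀ᶠ b in 𝓝 b', ∃ a ∈ W, (p b).IsRoot a :=
    fun b' w hw W hW => eventually_exists_isRoot_mem hmonic hdeg (hcont w).continuousAt hw hW
  obtain ⟨z, hz⟩ := exists_isRootEnumeration (hmonic b₀).ne_zero (hcard b₀)
  obtain ⟨U, hU, hdisj⟩ := (finite_range z).t2_separation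
  have hUdisj : Pairwise (Disjoint on fun i => U (z i)) :=
    fun i j hij => hdisj (mem_range_self i) (mem_range_self j) (hz.1.ne hij)
  obtain ⟨V, hVroots, hVo, hb₀⟩ := eventually_nhds_iff.1 <| eventually_all.2 fun i =>
    hroots_near b₀ (z i) (hz.isRoot i) (U (z i)) ((hU _).2.mem_nhds (hU _).1)
  choose! g hgU hg using hVroots
  have hgenum : ∀ b ∈ V, (p b).IsRootEnumeration (g b) := fun b hb =>
    isRootEnumeration_of_injective (hmonic b).ne_zero (hcard b)
      (fun i j hij => hUdisj.eq (not_disjoint_iff.2 ⟨_, hgU b hb i, hij ▸ hgU b hb j⟩))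
      (hg b hb)
  refine ⟨V, hVo, hb₀, g, continuousOn_pi.2 fun i => hVo.continuousOn_iff.2 fun b' hb' => ?_,
    hgenum⟩
  refine tendsto_def.2 fun W hW => ?_
  filter_upwards [hVo.mem_nhds hb', hroots_near b' _ (hg b' hb' i) _
    (inter_mem hW ((hU _).2.mem_nhds (hgU b' hb' i)))] with b hb ⟨a, ⟨haW, haU⟩, ha⟩
  rwa [mem_preimage, ← (hgenum b hb).eq_of_mem hUdisj (hgU b hb) ha haU]

theorem exists_continuous_isRootEnumeration {p : I → K[X]} (hmonic : ∀ t, (p t).Monic)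
    (hdeg : ∀ t, (p t).natDegree = n) (hcont : ∀ z, Continuous fun t => (p t).eval z)
    (hcard : ∀ t, (p t).roots.toFinset.card = n) :
    ∃ y : I → Fin n → K, Continuous y ∧ ∀ t, (p t).IsRootEnumeration (y t) := by
  choose V hVo hV g hgc hg using exists_continuousOn_isRootEnumeration hmonic hdeg hcont hcard
  obtain ⟨τ, hτ0, hτmono, ⟨m, hτm⟩, hτV⟩ :=
    exists_monotone_Icc_subset_open_cover_unitInterval hVo fun t _ => mem_iUnion.2 ⟨t, hV t⟩
  suffices ∀ k, ∃ y : I → Fin n → K,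
      ContinuousOn y (Iic (τ k)) ∧ ∀ t ≤ τ k, (p t).IsRootEnumeration (y t) by
    obtain ⟨y, hyc, hy⟩ := this m
    have hle : ∀ t, t ≤ τ m := fun t => hτm m le_rfl ▸ unitInterval.le_one'
    exact ⟨y, continuousOn_univ.1 (hyc.mono fun t _ => hle t), fun t => hy t (hle t)⟩
  intro k
  induction k with
  | zero =>
    obtain ⟨z, hz⟩ := exists_isRootEnumeration (hmonic 0).ne_zero (hcard 0)
    refine ⟨fun _ => z, continuousOn_const, fun t ht => ?_⟩
    rw [hτ0] at ht
    rwa [le_antisymm ht unitInterval.nonneg']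
  | succ k ih =>
    obtain ⟨y, hyc, hy⟩ := ih
    obtain ⟨s, hs⟩ := hτV k
    exact exists_continuousOn_Iic_isRootEnumeration_of_Icc (hτmono k.le_succ) hyc hy
      ((hgc s).mono hs) fun t ht => hg s t (hs ht)

end Continuity

end Polynomial

theorem stmt9_general (f : Polynomial (Polynomial ℂ)) (n : ℕ)
    (hmonic : f.Monic) (hdeg : f.natDegree = n)
    (h : unitInterval → ℂ) (hcont : Continuous h)
    (hN : ∀ t : unitInterval, ¬ ((f.map (evalRingHom (h t))).roots.toFinset.card < n)) :
    ∃ y : Fin n → unitInterval → ℂ,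
      (∀ i, Continuous (y i)) ∧
      (∀ (t : unitInterval) (i : Fin n), (f.map (evalRingHom (h t))).eval (y i t) = 0) ∧
      (∀ (t : unitInterval) (i j : Fin n), i ≠ j → y i t ≠ y j t) ∧
      (∀ t : unitInterval,
        {c : ℂ | (f.map (evalRingHom (h t))).eval c = 0} = Set.range fun i => y i t) := by
  have hpdeg : ∀ t, (f.map (evalRingHom (h t))).natDegree = n := fun t => by
    rw [hmonic.natDegree_map, hdeg]
  have hpcont : ∀ z, Continuous fun t => (f.map (evalRingHom (h t))).eval z := fun z => by
    simp only [map_evalRingHom_eval]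
    exact (Polynomial.continuous _).comp hcont
  have hpcard : ∀ t, (f.map (evalRingHom (h t))).roots.toFinset.card = n := fun t =>
    le_antisymm ((Multiset.toFinset_card_le _).trans
      (IsAlgClosed.card_roots_eq_natDegree.trans (hpdeg t)).le) (not_lt.1 (hN t))
  obtain ⟨y, hyc, hy⟩ :=
    exists_continuous_isRootEnumeration (fun t => hmonic.map _) hpdeg hpcont hpcard
  exact ⟨fun i t => y t i, fun i => (continuous_apply i).comp hyc, fun t i => (hy t).isRoot i,
    fun t i j hij => (hy t).1.ne hij, fun t => (hy t).2.symm⟩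

/-- For `f ∈ (ℂ[X])[Y]` monic of degree `n ≥ 1` in `Y`, and a continuous
path `h` in the complement of `N = {x : f_x has fewer than n distinct roots}`, the `n`
roots of `f_{h(t)}` can be followed continuously and without collision along the path;
at every time `t` they exhaust the root set of `f_{h(t)}`. -/
theorem stmt9 (f : Polynomial (Polynomial ℂ)) (n : ℕ) (hn : 1 ≤ n)
    (hmonic : f.Monic) (hdeg : f.natDegree = n)
    (h : unitInterval → ℂ) (hcont : Continuous h)
    (hN : ∀ t : unitInterval, ¬ ((f.map (evalRingHom (h t))).roots.toFinset.card < n)) :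
    ∃ y : Fin n → unitInterval → ℂ,
      (∀ i, Continuous (y i)) ∧
      (∀ (t : unitInterval) (i : Fin n), (f.map (evalRingHom (h t))).eval (y i t) = 0) ∧
      (∀ (t : unitInterval) (i j : Fin n), i ≠ j → y i t ≠ y j t) ∧
      (∀ t : unitInterval,
        {c : ℂ | (f.map (evalRingHom (h t))).eval c = 0} = Set.range fun i => y i t) :=
  stmt9_general f n hmonic hdeg h hcont hN
end
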